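/- arXiv:1810.10048 — 2 statements merged into one kernel-verified Lean document; each statement's English description precedes it below -/
import Mathlib

section
/- Let η > 0, let w be a lower semicontinuous viscosity supersolution of the equation min{∂_t u - ½ ∂²_{xx} u, ∂_s(u - U)} = 0 on int^p(Z) with boundary condition u = U(0,·) on ∂^p Z, and let w¹(s,t,x) := U(0,x) + η(1+s+t). Then for every μ ∈ (0,1), the convex combination w^μ := (1-μ)w + μ w¹ is a μη-strict viscosity supersolution of the same equation. -/
open MeasureTheory ProbabilityTheory Filter Set Topology

noncomputable section

namespace RootSEP

/-- The potential function `U(s,x) := -∫ |x-y| μ_s(dy)` of a family of marginals. -/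
def potential (μ : ℝ → Measure ℝ) (s x : ℝ) : ℝ := -∫ y, |x - y| ∂(μ s)

/-- The partial derivative `∂_s U(s,x)` of the potential function (the derivative in
`s` within `[0,1]`). -/
def dsU (μ : ℝ → Measure ℝ) (s x : ℝ) : ℝ :=
  derivWithin (fun r => potential μ r x) (Icc 0 1) s

/-- Standing assumptions on the family of marginals `μ = (μ_s)_{s ∈ [0,1]}`:
each `μ_s` is a centred probability measure with finite first moment, `s ↦ μ_s` is
càdlàg for the weak convergence topology, and the family is nondecreasing in convex order. -/
structure IsPeacock (μ : ℝ → Measure ℝ) : Prop where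
  prob : ∀ s ∈ Icc (0:ℝ) 1, IsProbabilityMeasure (μ s)
  first_moment : ∀ s ∈ Icc (0:ℝ) 1, Integrable (fun y => y) (μ s)
  centred : ∀ s ∈ Icc (0:ℝ) 1, (∫ y, y ∂(μ s)) = 0
  right_cont : ∀ s ∈ Ico (0:ℝ) 1, ∀ g : BoundedContinuousFunction ℝ ℝ,
    ContinuousWithinAt (fun r => ∫ y, g y ∂(μ r)) (Icc s 1) s
  left_lim : ∀ s ∈ Ioc (0:ℝ) 1, ∃ ν : Measure ℝ,
    ∀ g : BoundedContinuousFunction ℝ ℝ,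
      Tendsto (fun r => ∫ y, g y ∂(μ r)) (nhdsWithin s (Ico 0 s)) (𝓝 (∫ y, g y ∂ν))
  convex_order : ∀ φ : ℝ → ℝ, ConvexOn ℝ univ φ → ∀ s t : ℝ,
    s ∈ Icc (0:ℝ) 1 → t ∈ Icc (0:ℝ) 1 → s ≤ t →
    Integrable φ (μ s) → Integrable φ (μ t) →
    (∫ y, φ y ∂(μ s)) ≤ ∫ y, φ y ∂(μ t)

/-- Assumption (U): `∂_s U` exists and is continuous on `[0,1] × ℝ`, and
`x ↦ sup_{s ∈ [0,1]} |∂_s U(s,x)|` has at most polynomial growth. -/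
structure AssumptionU (μ : ℝ → Measure ℝ) : Prop where
  diff : ∀ s ∈ Icc (0:ℝ) 1, ∀ x : ℝ,
    DifferentiableWithinAt ℝ (fun r => potential μ r x) (Icc 0 1) s
  cont : ContinuousOn (fun p : ℝ × ℝ => dsU μ p.1 p.2) (Icc (0:ℝ) 1 ×ˢ univ)
  growth : ∃ C : ℝ, 0 < C ∧ ∃ p : ℕ, ∀ x : ℝ, ∀ s ∈ Icc (0:ℝ) 1, |dsU μ s x| ≤ C * (1 + |x| ^ p)

/-- `B` is a Brownian motion with initial law `μ₀` on the filtered probability space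
`(Ω, F, P)`: it has `μ₀` as initial law, is adapted with continuous paths on `[0,∞)`,
and has increments independent of the past with centred Gaussian law. -/
structure IsBrownianMotionFrom {Ω : Type*} {mΩ : MeasurableSpace Ω} (μ0 : Measure ℝ)
    (P : Measure Ω) (F : Filtration ℝ mΩ) (B : ℝ → Ω → ℝ) : Prop where
  meas : ∀ t : ℝ, StronglyMeasurable (B t)
  init : P.map (B 0) = μ0
  adapted : Adapted F B
  cont_paths : ∀ ω, ContinuousOn (fun t => B t ω) (Ici 0)
  indep_increments : ∀ s t : ℝ, 0 ≤ s → s ≤ t →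
    Indep (MeasurableSpace.comap (fun ω => B t ω - B s ω) (borel ℝ)) (F s) P
  gaussian_increments : ∀ s t : ℝ, 0 ≤ s → s ≤ t →
    P.map (fun ω => B t ω - B s ω) = gaussianReal 0 (Real.toNNReal (t - s))

/-- A stopping rule: a filtered probability space carrying a Brownian motion `B` with
initial law `μ₀` and a càdlàg nondecreasing family `(τ_s)_{s ∈ [0,1]}` of stopping
times with `τ_0 = 0`. -/
structure StoppingRule where
  Ω : Type
  mΩ : MeasurableSpace Ω
  F : Filtration ℝ mΩ
  P : Measure Ω
  prob : IsProbabilityMeasure P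
  B : ℝ → Ω → ℝ
  μ0 : Measure ℝ
  bm : IsBrownianMotionFrom μ0 P F B
  τ : ℝ → Ω → ℝ
  τ_nonneg : ∀ s ω, 0 ≤ τ s ω
  τ_zero : ∀ ω, τ 0 ω = 0
  τ_mono : ∀ ω, MonotoneOn (fun s => τ s ω) (Icc 0 1)
  τ_rc : ∀ ω, ∀ s ∈ Ico (0:ℝ) 1, ContinuousWithinAt (fun r => τ r ω) (Icc s 1) s
  τ_stop : ∀ s ∈ Icc (0:ℝ) 1, IsStoppingTime F (fun ω => ((τ s ω : ℝ) : WithTop ℝ))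

instance (α : StoppingRule) : MeasurableSpace α.Ω := α.mΩ

/-- A stopping rule is a `μ`-embedding if its initial law is `μ_0`, the stopped process
`(B_{t ∧ τ_1})_{t ≥ 0}` is uniformly integrable and `B_{τ_s} ∼ μ_s` for all `s ∈ [0,1]`. -/
def IsEmbedding (μ : ℝ → Measure ℝ) (α : StoppingRule) : Prop :=
  α.μ0 = μ 0 ∧
  UniformIntegrable (fun (t : NNReal) ω => α.B (min (t : ℝ) (α.τ 1 ω)) ω) 1 α.P ∧
  ∀ s ∈ Icc (0:ℝ) 1, α.P.map (fun ω => α.B (α.τ s ω) ω) = μ s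

/-- The value function `ũ(s,t,x)` defined from the optimal stopping problem over the
class `A_t^0` of stopping rules with `τ_1 ≤ t` and initial law `δ_0`. -/
def utilde (μ : ℝ → Measure ℝ) (s t x : ℝ) : ℝ :=
  sSup {r : ℝ | ∃ α : StoppingRule, α.μ0 = Measure.dirac 0 ∧ (∀ ω, α.τ 1 ω ≤ t) ∧
    r = ∫ ω, (potential μ 0 (x + α.B (α.τ s ω) ω)
        + ∫ k in (0:ℝ)..s,
            (if α.τ k ω < t then dsU μ (s - k) (x + α.B (α.τ k ω) ω) else 0)) ∂α.P}

/-- clamp to `[0,1]` -/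
def clamp (x : ℝ) : ℝ := max 0 (min 1 x)

lemma clamp_mem (x : ℝ) : clamp x ∈ Icc (0:ℝ) 1 :=
  ⟨le_max_left _ _, max_le (by norm_num) (min_le_left _ _)⟩

lemma clamp_mono : Monotone clamp :=
  fun _ _ h => max_le_max le_rfl (min_le_min le_rfl h)

lemma clamp_of_nonpos {x : ℝ} (hx : x ≤ 0) : clamp x = 0 := by
  have h1 : min 1 x = x := min_eq_right (by linarith)
  rw [clamp, h1, max_eq_left hx]

lemma clamp_of_mem {x : ℝ} (hx : x ∈ Icc (0:ℝ) 1) : clamp x = x := by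
  rw [clamp, min_eq_right hx.2, max_eq_right hx.1]

lemma clamp_of_ge_one {x : ℝ} (hx : (1:ℝ) ≤ x) : clamp x = 1 := by
  rw [clamp, min_eq_left hx]
  exact max_eq_right (by norm_num)

lemma continuous_clamp : Continuous clamp :=
  continuous_const.max (continuous_const.min continuous_id)


/-- The time-space domain `Z = [0,1] × ℝ_+ × ℝ`. -/
def Zset : Set (ℝ × ℝ × ℝ) := Icc (0:ℝ) 1 ×ˢ (Ici (0:ℝ) ×ˢ (univ : Set ℝ))

/-- The parabolic boundary `∂^p Z = {(s,t,x) ∈ Z : s ∧ t = 0}`. -/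
def pBoundary : Set (ℝ × ℝ × ℝ) := {z ∈ Zset | min z.1 z.2.1 = 0}

/-- The parabolic interior `int^p(Z) = Z \ ∂^p Z`. -/
def pInterior : Set (ℝ × ℝ × ℝ) := Zset \ pBoundary

/-- Partial derivative in the `s` variable. -/
def pderivS (φ : ℝ × ℝ × ℝ → ℝ) (z : ℝ × ℝ × ℝ) : ℝ :=
  deriv (fun s => φ (s, z.2.1, z.2.2)) z.1

/-- Partial derivative in the `t` variable. -/
def pderivT (φ : ℝ × ℝ × ℝ → ℝ) (z : ℝ × ℝ × ℝ) : ℝ :=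
  deriv (fun t => φ (z.1, t, z.2.2)) z.2.1

/-- Second partial derivative in the `x` variable. -/
def pderivXX (φ : ℝ × ℝ × ℝ → ℝ) (z : ℝ × ℝ × ℝ) : ℝ :=
  deriv (deriv (fun x => φ (z.1, z.2.1, x))) z.2.2

/-- The operator `F(Dφ, D²φ) = min{∂_t φ - ½ ∂²_xx φ, ∂_s φ - ∂_s U}`. -/
def Fop (μ : ℝ → Measure ℝ) (φ : ℝ × ℝ × ℝ → ℝ) (z : ℝ × ℝ × ℝ) : ℝ :=
  min (pderivT φ z - (1/2) * pderivXX φ z) (pderivS φ z - dsU μ z.1 z.2.2)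

/-- Viscosity subsolution of `min{∂_t u - ½∂²_xx u, ∂_s (u - U)} = 0` on `int^p Z`
with boundary condition `u ≤ U(0,·)` on `∂^p Z`. -/
def IsViscositySubsolution (μ : ℝ → Measure ℝ) (v : ℝ × ℝ × ℝ → ℝ) : Prop :=
  UpperSemicontinuousOn v Zset ∧
  (∀ z ∈ pBoundary, v z ≤ potential μ 0 z.2.2) ∧
  ∀ z0 ∈ pInterior, ∀ φ : ℝ × ℝ × ℝ → ℝ, ContDiff ℝ 2 φ →
    (∀ z ∈ Zset, v z - φ z ≤ v z0 - φ z0) → Fop μ φ z0 ≤ 0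

/-- `η`-strict viscosity supersolution: `w ≥ η + U(0,·)` on `∂^p Z` and
`F(Dφ, D²φ)(z₀) ≥ η` at interior test points. -/
def IsStrictViscositySupersolution (μ : ℝ → Measure ℝ) (η : ℝ) (w : ℝ × ℝ × ℝ → ℝ) : Prop :=
  LowerSemicontinuousOn w Zset ∧
  (∀ z ∈ pBoundary, η + potential μ 0 z.2.2 ≤ w z) ∧
  ∀ z0 ∈ pInterior, ∀ φ : ℝ × ℝ × ℝ → ℝ, ContDiff ℝ 2 φ →
    (∀ z ∈ Zset, w z0 - φ z0 ≤ w z - φ z) → η ≤ Fop μ φ z0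

/-- Viscosity supersolution. -/
def IsViscositySupersolution (μ : ℝ → Measure ℝ) (w : ℝ × ℝ × ℝ → ℝ) : Prop :=
  IsStrictViscositySupersolution μ 0 w

/-- A continuous (on `Z`) viscosity solution is both a subsolution and a supersolution. -/
def IsViscositySolution (μ : ℝ → Measure ℝ) (u : ℝ × ℝ × ℝ → ℝ) : Prop :=
  ContinuousOn u Zset ∧ IsViscositySubsolution μ u ∧ IsViscositySupersolution μ u

/-!
`U(0,·)` is concave, being an average of the concave functions `x ↦ -|x - y|`, so at the
minimum point `z₀ = (s₀,t₀,x₀)` of `w^λ - φ` it lies below an affine function `ℓ(x)` with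
`ℓ(x₀) = U(0,x₀)`. Then `w` minus the smooth function `ψ := (φ - λ (ℓ + η(1+s+t))) / (1-λ)`
is also minimal at `z₀`, and the supersolution inequality `F(ψ)(z₀) ≥ 0` rearranges to
`F(φ)(z₀) ≥ λη`: in the parabolic part directly, in the `s`-part because `∂_s U ≤ 0`,
`s ↦ U(s,x)` being nonincreasing along the convex order.
-/

section Potential

variable {ν : Measure ℝ} [IsFiniteMeasure ν]

lemma integrable_abs_sub (hν : Integrable id ν) (x : ℝ) : Integrable (fun y => |x - y|) ν :=
  ((integrable_const x).sub hν).abs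

lemma convexOn_integral_abs_sub (hν : Integrable id ν) :
    ConvexOn ℝ univ (fun x => ∫ y, |x - y| ∂ν) :=
  integral_convexOn_of_integrand_ae convex_univ
    (ae_of_all _ fun y => by simpa only [Real.dist_eq] using convexOn_univ_dist y)
    (fun x _ => integrable_abs_sub hν x)

end Potential

lemma _root_.ConvexOn.exists_forall_add_mul_sub_le {S : Set ℝ} {f : ℝ → ℝ}
    (hf : ConvexOn ℝ S f) {x₀ : ℝ} (hx₀ : x₀ ∈ interior S) :
    ∃ p, ∀ x ∈ S, f x₀ + p * (x - x₀) ≤ f x := by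
  refine ⟨derivWithin f (Ioi x₀) x₀, fun x hx => ?_⟩
  rcases lt_trichotomy x x₀ with hlt | rfl | hgt
  · have h := (hf.slope_le_leftDeriv_of_mem_interior hx hx₀ hlt).trans
      (hf.leftDeriv_le_rightDeriv_of_mem_interior hx₀)
    rw [slope_def_field, div_le_iff₀ (sub_pos.2 hlt)] at h
    linarith
  · simp
  · have h := hf.rightDeriv_le_slope_of_mem_interior hx₀ hx hgt
    rw [slope_def_field, le_div_iff₀ (sub_pos.2 hgt)] at h
    linarith

lemma _root_.ConcaveOn.exists_forall_le_add_mul_sub {S : Set ℝ} {f : ℝ → ℝ}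
    (hf : ConcaveOn ℝ S f) {x₀ : ℝ} (hx₀ : x₀ ∈ interior S) :
    ∃ p, ∀ x ∈ S, f x ≤ f x₀ + p * (x - x₀) := by
  obtain ⟨p, hp⟩ := hf.neg.exists_forall_add_mul_sub_le hx₀
  refine ⟨-p, fun x hx => ?_⟩
  have h := hp x hx
  simp only [Pi.neg_apply] at h
  linarith

section Peacock

variable {μ : ℝ → Measure ℝ}

lemma IsPeacock.concaveOn_potential (hμ : IsPeacock μ) {s : ℝ} (hs : s ∈ Icc (0:ℝ) 1) :
    ConcaveOn ℝ univ (potential μ s) := by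
  have := hμ.prob s hs
  exact (convexOn_integral_abs_sub (hμ.first_moment s hs)).neg

lemma IsPeacock.continuous_potential (hμ : IsPeacock μ) {s : ℝ} (hs : s ∈ Icc (0:ℝ) 1) :
    Continuous (potential μ s) := by
  simpa only [interior_univ, continuousOn_univ] using
    (hμ.concaveOn_potential hs).continuousOn_interior

lemma IsPeacock.antitoneOn_potential (hμ : IsPeacock μ) (x : ℝ) :
    AntitoneOn (fun s => potential μ s x) (Icc 0 1) := by
  intro s hs t ht hst
  have := hμ.prob s hs
  have := hμ.prob t ht
  exact neg_le_neg <| hμ.convex_order _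
    (by simpa only [Real.dist_eq, abs_sub_comm] using convexOn_univ_dist x) s t hs ht hst
    (integrable_abs_sub (hμ.first_moment s hs) x) (integrable_abs_sub (hμ.first_moment t ht) x)

lemma IsPeacock.dsU_nonpos (hμ : IsPeacock μ) (s x : ℝ) : dsU μ s x ≤ 0 :=
  (hμ.antitoneOn_potential x).derivWithin_nonpos

end Peacock

section AffinePerturbation

variable {φ : ℝ × ℝ × ℝ → ℝ} (k a b c d : ℝ)

lemma pderivS_const_mul_sub_affine (hφ : Differentiable ℝ φ) (z : ℝ × ℝ × ℝ) :
    pderivS (fun z => k * (φ z - (a + b * z.1 + c * z.2.1 + d * z.2.2))) z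
      = k * (pderivS φ z - b) := by
  simp only [pderivS]
  rw [deriv_const_mul_field, deriv_fun_sub (by fun_prop) (by fun_prop)]
  simp

lemma pderivT_const_mul_sub_affine (hφ : Differentiable ℝ φ) (z : ℝ × ℝ × ℝ) :
    pderivT (fun z => k * (φ z - (a + b * z.1 + c * z.2.1 + d * z.2.2))) z
      = k * (pderivT φ z - c) := by
  simp only [pderivT]
  rw [deriv_const_mul_field, deriv_fun_sub (by fun_prop) (by fun_prop)]
  simp

lemma pderivXX_const_mul_sub_affine (hφ : Differentiable ℝ φ) (z : ℝ × ℝ × ℝ) :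
    pderivXX (fun z => k * (φ z - (a + b * z.1 + c * z.2.1 + d * z.2.2))) z
      = k * pderivXX φ z := by
  have h : deriv (fun x => k * (φ (z.1, z.2.1, x) - (a + b * z.1 + c * z.2.1 + d * x)))
      = fun x => k * (deriv (fun x => φ (z.1, z.2.1, x)) x - d) := by
    funext x
    rw [deriv_const_mul_field, deriv_fun_sub (by fun_prop) (by fun_prop)]
    simp
  simp only [pderivXX, h, deriv_const_mul_field', deriv_sub_const]

lemma Fop_const_mul_sub_affine (μ : ℝ → Measure ℝ) (hφ : Differentiable ℝ φ)
    (z : ℝ × ℝ × ℝ) :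
    Fop μ (fun z => k * (φ z - (a + b * z.1 + c * z.2.1 + d * z.2.2))) z
      = min (k * (pderivT φ z - c - 1 / 2 * pderivXX φ z))
          (k * (pderivS φ z - b) - dsU μ z.1 z.2.2) := by
  rw [Fop, pderivS_const_mul_sub_affine _ _ _ _ _ hφ, pderivT_const_mul_sub_affine _ _ _ _ _ hφ,
    pderivXX_const_mul_sub_affine _ _ _ _ _ hφ]
  ring_nf

end AffinePerturbation

lemma IsViscositySupersolution.le_Fop_of_convex_combination {μ : ℝ → Measure ℝ}
    {w : ℝ × ℝ × ℝ → ℝ} (hw : IsViscositySupersolution μ w) (hμ : IsPeacock μ) {η lam : ℝ}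
    (hlam : lam ∈ Ioo (0:ℝ) 1)
    {z₀ : ℝ × ℝ × ℝ} (hz₀ : z₀ ∈ pInterior) {φ : ℝ × ℝ × ℝ → ℝ} (hφ : ContDiff ℝ 2 φ)
    (hmin : ∀ z ∈ Zset,
      (1 - lam) * w z₀ + lam * (potential μ 0 z₀.2.2 + η * (1 + z₀.1 + z₀.2.1)) - φ z₀ ≤
        (1 - lam) * w z + lam * (potential μ 0 z.2.2 + η * (1 + z.1 + z.2.1)) - φ z) :
    lam * η ≤ Fop μ φ z₀ := by
  have h1 : 0 < 1 - lam := sub_pos.2 hlam.2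
  have hU₀ := hμ.concaveOn_potential (left_mem_Icc.2 zero_le_one)
  obtain ⟨p, hp⟩ := hU₀.exists_forall_le_add_mul_sub (x₀ := z₀.2.2) (by simp)
  -- the test function `(φ - λ (ℓ + η (1 + s + t))) / (1 - λ)` for `w`, where
  -- `ℓ x = U(0,x₀) + p (x - x₀)`, written in the shape of `Fop_const_mul_sub_affine`
  have hF := hw.2.2 z₀ hz₀
    (fun z => (1 - lam)⁻¹ * (φ z - (lam * (potential μ 0 z₀.2.2 - p * z₀.2.2 + η)
      + lam * η * z.1 + lam * η * z.2.1 + lam * p * z.2.2))) (by fun_prop) fun z hz => by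
    have hℓ := mul_le_mul_of_nonneg_left (hp z.2.2 (mem_univ _)) hlam.1.le
    rw [← mul_le_mul_iff_of_pos_left h1]
    field_simp
    linarith [hmin z hz]
  rw [Fop_const_mul_sub_affine _ _ _ _ _ _ (hφ.differentiable (by norm_num))] at hF
  obtain ⟨hT, hS⟩ := le_min_iff.1 hF
  have hS' := (le_inv_mul_iff₀ h1).1 (sub_nonneg.1 hS)
  refine le_min ?_ ?_
  · linarith [nonneg_of_mul_nonneg_right hT (inv_pos.2 h1)]
  · linarith [mul_nonneg hlam.1.le (neg_nonneg.2 (hμ.dsU_nonpos z₀.1 z₀.2.2))]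

theorem convex_combination_strict_supersolution_general
    (μ : ℝ → Measure ℝ) (hμ : IsPeacock μ)
    (η : ℝ) (hη : 0 < η) (w : ℝ × ℝ × ℝ → ℝ)
    (hw : IsViscositySupersolution μ w)
    (lam : ℝ) (hlam : lam ∈ Ioo (0:ℝ) 1) :
    IsStrictViscositySupersolution μ (lam * η)
      (fun z : ℝ × ℝ × ℝ =>
        (1 - lam) * w z + lam * (potential μ 0 z.2.2 + η * (1 + z.1 + z.2.1))) := by
  have hU₀ : Continuous (potential μ 0) := hμ.continuous_potential (left_mem_Icc.2 zero_le_one)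
  refine ⟨?_, fun z hz => ?_, fun z₀ hz₀ φ hφ hmin =>
    hw.le_Fop_of_convex_combination hμ hlam hz₀ hφ hmin⟩
  · have hw₁ : Continuous fun z : ℝ × ℝ × ℝ =>
        lam * (potential μ 0 z.2.2 + η * (1 + z.1 + z.2.1)) := by
      fun_prop
    exact ((continuous_const_mul (1 - lam)).comp_lowerSemicontinuousOn hw.1
      (monotone_mul_left_of_nonneg (sub_pos.2 hlam.2).le)).add
      (hw₁.lowerSemicontinuous.lowerSemicontinuousOn _)
  · have hwz := mul_le_mul_of_nonneg_left (zero_add (potential μ 0 z.2.2) ▸ hw.2.1 z hz)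
      (sub_pos.2 hlam.2).le
    linarith [mul_nonneg (mul_nonneg hlam.1.le hη.le) (add_nonneg hz.1.1.1 hz.1.2.1)]

/-- the convex combination `w^λ = (1-λ) w + λ w¹` of a supersolution `w`
with `w¹ = U(0,·) + η(1+s+t)` is a `λη`-strict viscosity supersolution. -/
theorem convex_combination_strict_supersolution
    (μ : ℝ → Measure ℝ) (hμ : IsPeacock μ) (hU : AssumptionU μ)
    (η : ℝ) (hη : 0 < η) (w : ℝ × ℝ × ℝ → ℝ)
    (hw : IsViscositySupersolution μ w)
    (lam : ℝ) (hlam : lam ∈ Ioo (0:ℝ) 1) :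
    IsStrictViscositySupersolution μ (lam * η)
      (fun z : ℝ × ℝ × ℝ =>
        (1 - lam) * w z + lam * (potential μ 0 z.2.2 + η * (1 + z.1 + z.2.1))) :=
  convex_combination_strict_supersolution_general μ hμ η hη w hw lam hlam

end RootSEP
end
end

section
/- Let (μ_s)_{s∈[0,1]} be a family of probability measures on ℝ with finite first moments which is nondecreasing in convex order. Then the map s ↦ μ_s is continuous for the weak convergence topology at all but at most countably many points s ∈ [0,1]. -/
/-!
Since `y ↦ (y - q)⁺` is convex, every call function `r ↦ ∫ (y - q)⁺ dμ_r` is monotone, hence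
continuous off a countable set; the exceptional set is the union of these over rational `q`.
Off it the call functions converge at rational strikes, hence at all strikes because they are
`1`-Lipschitz in `q`. Hat functions are second differences of calls, so integrals of
piecewise linear interpolants converge too. A bounded continuous `g` is uniformly approximated
by such interpolants on `[-R, R]`, and the tails are controlled by the uniform moment bound
`∫ |y| dμ_r ≤ ∫ |y| dμ_1`, which holds because `|y|` is convex.
-/

open MeasureTheory Set Filter Topology
open scoped BoundedContinuousFunction

noncomputable section

def callPayoff (q y : ℝ) : ℝ := max (y - q) 0

def callFunction (μ : Measure ℝ) (q : ℝ) : ℝ := ∫ y, callPayoff q y ∂μ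

def callSpread (h q y : ℝ) : ℝ := callPayoff (q - h) y - callPayoff q y

/-- A butterfly spread of calls: the hat function of height `1` and half-width `h` centred
at `q`. -/
def butterfly (h q y : ℝ) : ℝ := (callSpread h q y - callSpread h (q + h) y) / h

/-- On `[a, a + N * h]`, the piecewise linear interpolation of `g` at the nodes `a + i * h`. -/
def butterflyInterpolant (g : ℝ → ℝ) (a h : ℝ) (N : ℕ) (y : ℝ) : ℝ :=
  ∑ i ∈ Finset.range (N + 1), g (a + i * h) * butterfly h (a + i * h) y

section Payoffs

variable {h q y : ℝ}

lemma callPayoff_nonneg (q y : ℝ) : 0 ≤ callPayoff q y := le_max_right _ _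

lemma callPayoff_of_le (hy : y ≤ q) : callPayoff q y = 0 := max_eq_right (by linarith)

lemma callPayoff_of_ge (hy : q ≤ y) : callPayoff q y = y - q := max_eq_left (by linarith)

lemma callPayoff_le (q y : ℝ) : callPayoff q y ≤ |y| + |q| :=
  max_le (by linarith [le_abs_self y, neg_abs_le q]) (by positivity)

lemma abs_callPayoff_sub_callPayoff_le (q q' y : ℝ) :
    |callPayoff q y - callPayoff q' y| ≤ |q - q'| := by
  have := abs_max_sub_max_le_abs (y - q) (y - q') 0
  rw [sub_sub_sub_cancel_left] at this
  rwa [abs_sub_comm q]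

lemma continuous_callPayoff (q : ℝ) : Continuous (callPayoff q) :=
  (continuous_id.sub continuous_const).max continuous_const

lemma convexOn_callPayoff (q : ℝ) : ConvexOn ℝ univ (callPayoff q) :=
  ((convexOn_id convex_univ).sub (concaveOn_const q convex_univ)).sup
    (convexOn_const 0 convex_univ)

lemma callSpread_nonneg (hh : 0 ≤ h) (q y : ℝ) : 0 ≤ callSpread h q y :=
  sub_nonneg.2 (max_le_max (by linarith) le_rfl)

lemma callSpread_le (q y : ℝ) : callSpread h q y ≤ |h| := by
  have := (abs_le.1 (abs_callPayoff_sub_callPayoff_le (q - h) q y)).2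
  rw [sub_sub_cancel_left, abs_neg] at this
  exact this

lemma callSpread_of_le (hh : 0 ≤ h) (hy : q ≤ y) : callSpread h q y = h := by
  rw [callSpread, callPayoff_of_ge hy, callPayoff_of_ge (by linarith)]
  ring

lemma callSpread_of_ge (hh : 0 ≤ h) (hy : y ≤ q - h) : callSpread h q y = 0 := by
  rw [callSpread, callPayoff_of_le hy, callPayoff_of_le (by linarith), sub_zero]

end Payoffs

section Butterfly

variable {h q a y ε K : ℝ} {N : ℕ}

lemma butterfly_nonneg (hh : 0 < h) (q y : ℝ) : 0 ≤ butterfly h q y := by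
  refine div_nonneg (sub_nonneg.2 ?_) hh.le
  rcases le_total y q with hy | hy
  · rw [callSpread_of_ge hh.le (by linarith : y ≤ q + h - h)]
    exact callSpread_nonneg hh.le q y
  · rw [callSpread_of_le hh.le hy]
    exact (callSpread_le _ _).trans (abs_of_pos hh).le

lemma butterfly_eq_zero (hh : 0 < h) (hy : h ≤ |y - q|) : butterfly h q y = 0 := by
  rcases le_abs.1 hy with hy | hy
  · rw [butterfly, callSpread_of_le hh.le (by linarith), callSpread_of_le hh.le (by linarith),
      sub_self, zero_div]
  · rw [butterfly, callSpread_of_ge hh.le (by linarith),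
      callSpread_of_ge hh.le (by linarith : y ≤ q + h - h), sub_self, zero_div]

lemma sum_butterfly (h a y : ℝ) (N : ℕ) :
    ∑ i ∈ Finset.range (N + 1), butterfly h (a + i * h) y
      = (callSpread h a y - callSpread h (a + (N + 1) * h) y) / h := by
  have hnode : ∀ i : ℕ, a + i * h + h = a + (i + 1 : ℕ) * h := fun i => by push_cast; ring
  simp only [butterfly, hnode, ← Finset.sum_div]
  rw [Finset.sum_range_sub' (fun i : ℕ => callSpread h (a + i * h) y)]
  push_cast
  simp

lemma sum_butterfly_le_one (hh : 0 < h) (a y : ℝ) (N : ℕ) :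
    ∑ i ∈ Finset.range (N + 1), butterfly h (a + i * h) y ≤ 1 := by
  rw [sum_butterfly, div_le_one hh]
  linarith [callSpread_le (h := h) a y, abs_of_pos hh, callSpread_nonneg hh.le (a + (N + 1) * h) y]

lemma sum_butterfly_eq_one (hh : 0 < h) (hy : y ∈ Icc a (a + N * h)) :
    ∑ i ∈ Finset.range (N + 1), butterfly h (a + i * h) y = 1 := by
  rw [sum_butterfly, callSpread_of_le hh.le hy.1, callSpread_of_ge hh.le (by linarith [hy.2]),
    sub_zero, div_self hh.ne']

lemma abs_butterflyInterpolant_le {g : ℝ → ℝ} (hh : 0 < h) (hg : ∀ z, |g z| ≤ K) (a : ℝ)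
    (N : ℕ) (y : ℝ) : |butterflyInterpolant g a h N y| ≤ K := by
  have hK : 0 ≤ K := (abs_nonneg _).trans (hg 0)
  calc |butterflyInterpolant g a h N y|
      ≤ ∑ i ∈ Finset.range (N + 1), |g (a + i * h) * butterfly h (a + i * h) y| :=
        Finset.abs_sum_le_sum_abs _ _
    _ ≤ ∑ i ∈ Finset.range (N + 1), K * butterfly h (a + i * h) y := by
        gcongr with i
        rw [abs_mul, abs_of_nonneg (butterfly_nonneg hh _ _)]
        exact mul_le_mul_of_nonneg_right (hg _) (butterfly_nonneg hh _ _)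
    _ ≤ K := by
        rw [← Finset.mul_sum]
        exact mul_le_of_le_one_right hK (sum_butterfly_le_one hh a y N)

lemma abs_butterflyInterpolant_sub_le {g : ℝ → ℝ} (hh : 0 < h) (hy : y ∈ Icc a (a + N * h))
    (hg : ∀ z ∈ Icc a (a + N * h), |z - y| < h → |g z - g y| ≤ ε) :
    |butterflyInterpolant g a h N y - g y| ≤ ε := by
  have hsum := sum_butterfly_eq_one hh hy
  calc |butterflyInterpolant g a h N y - g y|
      = |∑ i ∈ Finset.range (N + 1), (g (a + i * h) - g y) * butterfly h (a + i * h) y| := by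
        simp only [butterflyInterpolant, sub_mul, Finset.sum_sub_distrib, ← Finset.mul_sum, hsum,
          mul_one]
    _ ≤ ∑ i ∈ Finset.range (N + 1), |(g (a + i * h) - g y) * butterfly h (a + i * h) y| :=
        Finset.abs_sum_le_sum_abs _ _
    _ ≤ ∑ i ∈ Finset.range (N + 1), ε * butterfly h (a + i * h) y := by
        gcongr with i hi
        by_cases hfar : h ≤ |y - (a + i * h)|
        · simp [butterfly_eq_zero hh hfar]
        have hi : (i : ℝ) ≤ N := by exact_mod_cast Nat.lt_succ_iff.1 (Finset.mem_range.1 hi)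
        have hnode : a + i * h ∈ Icc a (a + N * h) :=
          ⟨by nlinarith [i.cast_nonneg (α := ℝ)], by nlinarith⟩
        rw [abs_mul, abs_of_nonneg (butterfly_nonneg hh _ _)]
        exact mul_le_mul_of_nonneg_right (hg _ hnode (by rwa [abs_sub_comm, ← not_le]))
          (butterfly_nonneg hh _ _)
    _ = ε := by rw [← Finset.mul_sum, hsum, mul_one]

end Butterfly

lemma exists_abs_sub_butterflyInterpolant_le (g : ℝ →ᵇ ℝ) {ε R : ℝ} (hε : 0 < ε) (hR : 0 < R) :
    ∃ a h N, ∀ y, |g y - butterflyInterpolant g a h N y| ≤ ε + 2 * ‖g‖ / R * |y| := by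
  obtain ⟨δ, hδ, hgδ⟩ := Metric.uniformContinuousOn_iff.1
    (isCompact_Icc.uniformContinuousOn_of_continuous g.continuous.continuousOn :
      UniformContinuousOn g (Icc (-R) R)) ε hε
  obtain ⟨N, hN⟩ := exists_nat_gt (2 * R / δ)
  have hN0 : (0 : ℝ) < N := (by positivity : (0 : ℝ) ≤ 2 * R / δ).trans_lt hN
  set h := 2 * R / N with h_def
  have hh : 0 < h := by positivity
  have hhδ : h < δ := by
    rw [div_lt_iff₀ hN0]
    rw [div_lt_iff₀ hδ] at hN
    linarith
  have hend : -R + N * h = R := by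
    rw [h_def]
    field_simp
    ring
  have hgK : ∀ z, |g z| ≤ ‖g‖ := fun z => by simpa using g.norm_coe_le_norm z
  refine ⟨-R, h, N, fun y => ?_⟩
  by_cases hy : y ∈ Icc (-R) R
  · have hclose := abs_butterflyInterpolant_sub_le hh (by rwa [hend]) fun z hz hzy =>
      (hgδ z (by rwa [hend] at hz) y hy (by rw [Real.dist_eq]; linarith)).le
    rw [abs_sub_comm]
    linarith [(by positivity : 0 ≤ 2 * ‖g‖ / R * |y|)]
  · have hRy : R ≤ |y| := by
      rw [mem_Icc, not_and_or, not_le, not_le] at hy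
      rcases hy with hy | hy
      · linarith [neg_le_abs y]
      · linarith [le_abs_self y]
    calc |g y - butterflyInterpolant g (-R) h N y|
        ≤ |g y| + |butterflyInterpolant g (-R) h N y| := abs_sub _ _
      _ ≤ ‖g‖ + ‖g‖ := add_le_add (hgK y) (abs_butterflyInterpolant_le hh hgK _ _ _)
      _ ≤ 2 * ‖g‖ / R * |y| := by
        rw [div_mul_eq_mul_div, le_div_iff₀ hR]
        nlinarith [norm_nonneg g]
      _ ≤ ε + 2 * ‖g‖ / R * |y| := le_add_of_nonneg_left hε.le

section Integrals

variable {ρ : Measure ℝ} (hρ : Integrable (fun y => y) ρ)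
include hρ

lemma integrable_callPayoff [IsFiniteMeasure ρ] (q : ℝ) : Integrable (callPayoff q) ρ :=
  (hρ.abs.add (integrable_const |q|)).mono' (continuous_callPayoff q).aestronglyMeasurable
    (Eventually.of_forall fun y => by
      rw [Real.norm_eq_abs, abs_of_nonneg (callPayoff_nonneg q y)]
      exact callPayoff_le q y)

lemma integrable_callSpread [IsFiniteMeasure ρ] (h q : ℝ) : Integrable (callSpread h q) ρ :=
  (integrable_callPayoff hρ _).sub (integrable_callPayoff hρ _)

lemma integrable_butterfly [IsFiniteMeasure ρ] (h q : ℝ) : Integrable (butterfly h q) ρ :=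
  ((integrable_callSpread hρ h q).sub (integrable_callSpread hρ h (q + h))).div_const h

lemma integrable_butterflyInterpolant [IsFiniteMeasure ρ] (g : ℝ → ℝ) (a h : ℝ) (N : ℕ) :
    Integrable (butterflyInterpolant g a h N) ρ :=
  integrable_finsetSum _ fun _ _ => (integrable_butterfly hρ _ _).const_mul _

lemma integral_callSpread [IsFiniteMeasure ρ] (h q : ℝ) :
    ∫ y, callSpread h q y ∂ρ = callFunction ρ (q - h) - callFunction ρ q :=
  integral_sub (integrable_callPayoff hρ _) (integrable_callPayoff hρ _)

lemma integral_butterfly [IsFiniteMeasure ρ] (h q : ℝ) :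
    ∫ y, butterfly h q y ∂ρ = (callFunction ρ (q - h) - callFunction ρ q
      - (callFunction ρ (q + h - h) - callFunction ρ (q + h))) / h := by
  rw [← integral_callSpread hρ, ← integral_callSpread hρ,
    ← integral_sub (integrable_callSpread hρ _ _) (integrable_callSpread hρ _ _), ← integral_div]
  rfl

lemma integral_butterflyInterpolant [IsFiniteMeasure ρ] (g : ℝ → ℝ) (a h : ℝ) (N : ℕ) :
    ∫ y, butterflyInterpolant g a h N y ∂ρ
      = ∑ i ∈ Finset.range (N + 1), g (a + i * h) * ∫ y, butterfly h (a + i * h) y ∂ρ := by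
  simp only [butterflyInterpolant]
  rw [integral_finsetSum _ fun _ _ => (integrable_butterfly hρ _ _).const_mul _]
  simp only [integral_const_mul]

lemma lipschitzWith_callFunction [IsProbabilityMeasure ρ] : LipschitzWith 1 (callFunction ρ) :=
  LipschitzWith.of_dist_le_mul fun q q' => by
    rw [Real.dist_eq, Real.dist_eq, NNReal.coe_one, one_mul, callFunction, callFunction,
      ← integral_sub (integrable_callPayoff hρ q) (integrable_callPayoff hρ q')]
    simpa using norm_integral_le_of_norm_le_const (μ := ρ)
      (f := fun y => callPayoff q y - callPayoff q' y)
      (Eventually.of_forall fun y => abs_callPayoff_sub_callPayoff_le q q' y)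

lemma abs_integral_sub_integral_le [IsProbabilityMeasure ρ] {f p : ℝ → ℝ} (hf : Integrable f ρ)
    (hp : Integrable p ρ) {ε c : ℝ} (hfp : ∀ y, |f y - p y| ≤ ε + c * |y|) :
    |∫ y, f y ∂ρ - ∫ y, p y ∂ρ| ≤ ε + c * ∫ y, |y| ∂ρ := by
  rw [← integral_sub hf hp]
  calc |∫ y, f y - p y ∂ρ| ≤ ∫ y, |f y - p y| ∂ρ := abs_integral_le_integral_abs
    _ ≤ ∫ y, ε + c * |y| ∂ρ :=
        integral_mono (hf.sub hp).abs ((integrable_const ε).add (hρ.abs.const_mul c)) hfp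
    _ = ε + c * ∫ y, |y| ∂ρ := by
        rw [integral_add (integrable_const ε) (hρ.abs.const_mul c), integral_const_mul]
        simp

end Integrals

section Convergence

variable {ι : Type*} {l : Filter ι} {ν : ι → Measure ℝ} {ν₀ : Measure ℝ}

lemma tendsto_of_forall_dist_le {α : Type*} [PseudoMetricSpace α] {F : ι → α} {x : α}
    (h : ∀ ε > 0, ∃ G : ι → α, ∃ y, Tendsto G l (𝓝 y) ∧ (∀ i, dist (F i) (G i) ≤ ε) ∧
      dist y x ≤ ε) :
    Tendsto F l (𝓝 x) := by
  refine Metric.tendsto_nhds.2 fun ε hε => ?_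
  obtain ⟨G, y, hG, hFG, hyx⟩ := h (ε / 3) (by positivity)
  filter_upwards [Metric.tendsto_nhds.1 hG (ε / 3) (by positivity)] with i hi
  calc dist (F i) x ≤ dist (F i) (G i) + dist (G i) y + dist y x := dist_triangle4 _ _ _ _
    _ < ε := by linarith [hFG i]

lemma tendsto_integral_butterflyInterpolant [∀ i, IsFiniteMeasure (ν i)] [IsFiniteMeasure ν₀]
    (hν : ∀ i, Integrable (fun y => y) (ν i)) (hν₀ : Integrable (fun y => y) ν₀)
    (hcall : ∀ q, Tendsto (fun i => callFunction (ν i) q) l (𝓝 (callFunction ν₀ q)))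
    (g : ℝ → ℝ) (a h : ℝ) (N : ℕ) :
    Tendsto (fun i => ∫ y, butterflyInterpolant g a h N y ∂ν i) l
      (𝓝 (∫ y, butterflyInterpolant g a h N y ∂ν₀)) := by
  simp only [integral_butterflyInterpolant (hν _), integral_butterflyInterpolant hν₀,
    integral_butterfly (hν _), integral_butterfly hν₀]
  exact tendsto_finsetSum _ fun i _ =>
    ((((hcall _).sub (hcall _)).sub ((hcall _).sub (hcall _))).div_const h).const_mul _

lemma tendsto_callFunction_of_forall_rat [∀ i, IsProbabilityMeasure (ν i)]
    [IsProbabilityMeasure ν₀] (hν : ∀ i, Integrable (fun y => y) (ν i))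
    (hν₀ : Integrable (fun y => y) ν₀)
    (hcall : ∀ q : ℚ, Tendsto (fun i => callFunction (ν i) q) l (𝓝 (callFunction ν₀ q)))
    (q : ℝ) : Tendsto (fun i => callFunction (ν i) q) l (𝓝 (callFunction ν₀ q)) :=
  Rat.denseRange_cast.induction_on q
    ((LipschitzWith.uniformEquicontinuous _ 1 fun i =>
      lipschitzWith_callFunction (hν i)).equicontinuous.isClosed_setOfPred_tendsto
        (lipschitzWith_callFunction hν₀).continuous) hcall

theorem tendsto_integral_of_tendsto_callFunction [∀ i, IsProbabilityMeasure (ν i)]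
    [IsProbabilityMeasure ν₀] (hν : ∀ i, Integrable (fun y => y) (ν i))
    (hν₀ : Integrable (fun y => y) ν₀) {M : ℝ} (hM : ∀ i, ∫ y, |y| ∂ν i ≤ M)
    (hM₀ : ∫ y, |y| ∂ν₀ ≤ M)
    (hcall : ∀ q, Tendsto (fun i => callFunction (ν i) q) l (𝓝 (callFunction ν₀ q)))
    (g : ℝ →ᵇ ℝ) : Tendsto (fun i => ∫ y, g y ∂ν i) l (𝓝 (∫ y, g y ∂ν₀)) := by
  refine tendsto_of_forall_dist_le fun ε hε => ?_
  have hM0 : 0 ≤ M := (integral_nonneg fun y => abs_nonneg y).trans hM₀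
  set R := 4 * ‖g‖ * M / ε + 1 with hR_def
  have hR : 0 < R := by positivity
  obtain ⟨a, h, N, happrox⟩ := exists_abs_sub_butterflyInterpolant_le g (half_pos hε) hR
  have hclose : ∀ (ρ : Measure ℝ) [IsProbabilityMeasure ρ], Integrable (fun y => y) ρ →
      ∫ y, |y| ∂ρ ≤ M →
      dist (∫ y, g y ∂ρ) (∫ y, butterflyInterpolant g a h N y ∂ρ) ≤ ε := by
    intro ρ _ hρ hρM
    have htail : 2 * ‖g‖ / R * ∫ y, |y| ∂ρ ≤ ε / 2 :=
      calc 2 * ‖g‖ / R * ∫ y, |y| ∂ρ ≤ 2 * ‖g‖ / R * M := by gcongr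
        _ ≤ ε / 2 := by
          rw [div_mul_eq_mul_div, div_le_iff₀ hR, hR_def]
          field_simp
          linarith
    rw [Real.dist_eq]
    linarith [abs_integral_sub_integral_le hρ (g.integrable ρ)
      (integrable_butterflyInterpolant hρ g a h N) happrox]
  exact ⟨_, _, tendsto_integral_butterflyInterpolant hν hν₀ hcall g a h N,
    fun i => hclose _ (hν i) (hM i), (dist_comm _ _).trans_le (hclose _ hν₀ hM₀)⟩

end Convergence

/-- a family `(μ_s)_{s ∈ [0,1]}` of probability measures with finite first
moments which is nondecreasing in convex order is weakly continuous at all but at most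
countably many points of `[0,1]`. -/
theorem convex_order_family_ae_continuous
    (μ : ℝ → Measure ℝ)
    (hprob : ∀ s ∈ Icc (0:ℝ) 1, IsProbabilityMeasure (μ s))
    (hmom : ∀ s ∈ Icc (0:ℝ) 1, Integrable (fun y => y) (μ s))
    (hconv : ∀ φ : ℝ → ℝ, ConvexOn ℝ univ φ → ∀ s t : ℝ,
      s ∈ Icc (0:ℝ) 1 → t ∈ Icc (0:ℝ) 1 → s ≤ t →
      Integrable φ (μ s) → Integrable φ (μ t) →
      (∫ y, φ y ∂(μ s)) ≤ ∫ y, φ y ∂(μ t)) :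
    ∃ T : Set ℝ, T.Countable ∧
      ∀ s ∈ Icc (0:ℝ) 1, s ∉ T →
        ∀ g : BoundedContinuousFunction ℝ ℝ,
          ContinuousWithinAt (fun r => ∫ y, g y ∂(μ r)) (Icc 0 1) s := by
  -- On the subtype every member of the family is a probability measure with finite mean.
  set ν : Icc (0 : ℝ) 1 → Measure ℝ := fun t => μ t
  have : ∀ t, IsProbabilityMeasure (ν t) := fun t => hprob t t.2
  have hν : ∀ t, Integrable (fun y => y) (ν t) := fun t => hmom t t.2
  have hcall_mono : ∀ q, Monotone fun t => callFunction (ν t) q := fun q t t' htt' =>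
    hconv _ (convexOn_callPayoff q) t t' t.2 t'.2 htt' (integrable_callPayoff (hν t) q)
      (integrable_callPayoff (hν t') q)
  have h1 : (1 : ℝ) ∈ Icc (0 : ℝ) 1 := right_mem_Icc.2 zero_le_one
  have hmoment : ∀ t, ∫ y, |y| ∂ν t ≤ ∫ y, |y| ∂ν ⟨1, h1⟩ := fun t =>
    hconv (fun y => |y|) convexOn_univ_norm t 1 t.2 h1 t.2.2 (hν t).abs (hmom 1 h1).abs
  refine ⟨Subtype.val '' ⋃ q : ℚ, {t | ¬ContinuousAt (fun t => callFunction (ν t) q) t},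
    (countable_iUnion fun q : ℚ => (hcall_mono q).countable_not_continuousAt).image _,
    fun s hs hsT g => ?_⟩
  rw [continuousWithinAt_iff_continuousAt_domRestrict _ hs]
  refine tendsto_integral_of_tendsto_callFunction hν (hν _) hmoment (hmoment _)
    (tendsto_callFunction_of_forall_rat hν (hν _) fun q => ?_) g
  by_contra hq
  exact hsT ⟨⟨s, hs⟩, mem_iUnion.2 ⟨q, hq⟩, rfl⟩
end
end
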